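/- arXiv:2105.05368 — 3 statements merged into one kernel-verified Lean document; each statement's English description precedes it below -/
import Mathlib

section
/- If G is a connected r-regular graph on n vertices with adjacency matrix A having distinct eigenvalues r = λ₁, λ₂, …, λ_t, then the polynomial P(x) = n·∏_{i=2}^{t}(x-λ_i)/∏_{i=2}^{t}(r-λ_i) satisfies P(A) = J_n, the all-ones matrix. -/
open scoped Classical
open Polynomial Matrix

/-- The normalized Laplacian `L = I - D^{-1/2} A D^{-1/2}` of a finite simple graph. -/
noncomputable def normLap {V : Type*} [Fintype V] (G : SimpleGraph V) : Matrix V V ℝ :=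
  1 - Matrix.diagonal (fun v => (Real.sqrt (G.degree v))⁻¹) * G.adjMatrix ℝ *
      Matrix.diagonal (fun v => (Real.sqrt (G.degree v))⁻¹)

/-- `μ` is an eigenvalue of the matrix `M`. -/
def Matrix.IsEigenvalue {V : Type*} [Fintype V] (M : Matrix V V ℝ) (μ : ℝ) : Prop :=
  ∃ v : V → ℝ, v ≠ 0 ∧ M.mulVec v = μ • v

section Aux

variable {V : Type*} [Fintype V] [DecidableEq V]

private lemma pow_mulVec_eigen (M : Matrix V V ℝ) (v : V → ℝ) (μ : ℝ)
    (h : M.mulVec v = μ • v) : ∀ k : ℕ, (M ^ k).mulVec v = μ ^ k • v := by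
  intro k
  induction k with
  | zero => simp
  | succ k ih =>
      rw [pow_succ', pow_succ', ← mulVec_mulVec, ih, mulVec_smul, h, smul_smul, mul_comm (μ ^ k) μ]

private lemma aeval_mulVec_eigen (M : Matrix V V ℝ) (v : V → ℝ) (μ : ℝ)
    (h : M.mulVec v = μ • v) (p : ℝ[X]) :
    (Polynomial.aeval M p).mulVec v = p.eval μ • v := by
  induction p using Polynomial.induction_on' with
  | add p q hp hq => simp [hp, hq, add_mulVec, add_smul]
  | monomial n a =>
      rw [aeval_monomial, eval_monomial, ← Algebra.smul_def, smul_mulVec,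
        pow_mulVec_eigen M v μ h, smul_smul]

private lemma conj_pow' (U D W : Matrix V V ℝ) (hUW : U * W = 1) (hWU : W * U = 1) :
    ∀ n : ℕ, (U * D * W) ^ n = U * D ^ n * W := by
  intro n
  induction n with
  | zero => rw [pow_zero, pow_zero, Matrix.mul_one, hUW]
  | succ n ih =>
      rw [pow_succ, ih, pow_succ]
      calc U * D ^ n * W * (U * D * W) = U * D ^ n * (W * U) * D * W := by
            simp only [Matrix.mul_assoc]
        _ = U * (D ^ n * D) * W := by rw [hWU, Matrix.mul_one]; simp only [Matrix.mul_assoc]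

private lemma aeval_conj (U D W : Matrix V V ℝ) (hUW : U * W = 1) (hWU : W * U = 1)
    (p : ℝ[X]) :
    Polynomial.aeval (U * D * W) p = U * Polynomial.aeval D p * W := by
  induction p using Polynomial.induction_on' with
  | add p q hp hq => rw [map_add, map_add, hp, hq, Matrix.mul_add, Matrix.add_mul]
  | monomial n a =>
      rw [aeval_monomial, aeval_monomial, conj_pow' U D W hUW hWU, ← Algebra.smul_def,
        ← Algebra.smul_def, Matrix.mul_smul, smul_mul_assoc]

private lemma aeval_diagonal (d : V → ℝ) (p : ℝ[X]) :
    Polynomial.aeval (Matrix.diagonal d) p = Matrix.diagonal (fun i => p.eval (d i)) := by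
  induction p using Polynomial.induction_on' with
  | add p q hp hq =>
      rw [map_add, hp, hq, diagonal_add]
      funext i
      simp
  | monomial n a =>
      rw [aeval_monomial, ← Algebra.smul_def, diagonal_pow]
      ext i j
      rcases eq_or_ne i j with h | h
      · subst h; simp [eval_monomial]
      · simp [Matrix.diagonal_apply_ne _ h]

/-- A polynomial vanishing on all eigenvalues annihilates a Hermitian matrix. -/
private lemma aeval_eq_zero_of_eigenvalues {A : Matrix V V ℝ} (hA : A.IsHermitian)
    (p : ℝ[X]) (hp : ∀ i, p.eval (hA.eigenvalues i) = 0) :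
    Polynomial.aeval A p = 0 := by
  have hspec := hA.spectral_theorem
  have hUW : (hA.eigenvectorUnitary : Matrix V V ℝ) * star (hA.eigenvectorUnitary : Matrix V V ℝ) = 1 :=
    Unitary.coe_mul_star_self hA.eigenvectorUnitary
  have hWU : star (hA.eigenvectorUnitary : Matrix V V ℝ) * (hA.eigenvectorUnitary : Matrix V V ℝ) = 1 :=
    Unitary.coe_star_mul_self hA.eigenvectorUnitary
  have hdiag : (RCLike.ofReal ∘ hA.eigenvalues : V → ℝ) = hA.eigenvalues := by
    ext i; simp
  rw [hdiag] at hspec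
  rw [Unitary.conjStarAlgAut_apply] at hspec
  conv_lhs => rw [hspec]
  rw [aeval_conj _ _ _ hUW hWU, aeval_diagonal]
  have : (Matrix.diagonal fun i => p.eval (hA.eigenvalues i)) = 0 := by
    have : (fun i => p.eval (hA.eigenvalues i)) = fun _ => (0 : ℝ) := by
      ext i; exact hp i
    rw [this, diagonal_zero]
  rw [this, Matrix.mul_zero, Matrix.zero_mul]

private lemma aeval_transpose (A : Matrix V V ℝ) (hA : Aᵀ = A) (p : ℝ[X]) :
    (Polynomial.aeval A p)ᵀ = Polynomial.aeval A p := by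
  induction p using Polynomial.induction_on' with
  | add p q hp hq => rw [map_add, transpose_add, hp, hq]
  | monomial n a =>
      rw [aeval_monomial, ← Algebra.smul_def, transpose_smul, transpose_pow, hA]

end Aux

section Eigen

variable {V : Type*} [Fintype V]

/-- An eigenvector of the top eigenvalue of a connected regular graph is constant. -/
private lemma eigen_const (G : SimpleGraph V) [DecidableRel G.Adj] (r : ℕ)
    (hreg : G.IsRegularOfDegree r) (hconn : G.Connected) (v : V → ℝ)
    (hv : (G.adjMatrix ℝ).mulVec v = (r : ℝ) • v) : ∀ i j : V, v i = v j := by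
  have hne : Nonempty V := hconn.nonempty
  obtain ⟨i0, -, hmax⟩ := Finset.exists_max_image Finset.univ v Finset.univ_nonempty
  set m := v i0 with hm
  have hmax' : ∀ a : V, v a ≤ m := fun a => hmax a (Finset.mem_univ a)
  -- step: adjacency preserves being at the max
  have step : ∀ a b : V, v a = m → G.Adj a b → v b = m := by
    intro a b ha hadj
    have hsum : ∑ y ∈ G.neighborFinset a, v y = (r : ℝ) * v a := by
      have := congrFun hv a
      rwa [SimpleGraph.adjMatrix_mulVec_apply, Pi.smul_apply, smul_eq_mul] at this
    have hcard : (G.neighborFinset a).card = r := hreg a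
    have hzero : ∑ y ∈ G.neighborFinset a, (m - v y) = 0 := by
      rw [Finset.sum_sub_distrib, Finset.sum_const, hcard, hsum, ha, nsmul_eq_mul, sub_self]
    have hall := (Finset.sum_eq_zero_iff_of_nonneg
      (fun y _ => sub_nonneg.mpr (hmax' y))).mp hzero
    have hb : b ∈ G.neighborFinset a := (SimpleGraph.mem_neighborFinset G a b).mpr hadj
    have := hall b hb
    linarith
  -- walk induction
  have walkstep : ∀ {a b : V} (_ : G.Walk a b), v a = m → v b = m := by
    intro a b w
    induction w with
    | nil => exact id
    | cons hadj _ ih => exact fun ha => ih (step _ _ ha hadj)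
  have hall : ∀ b : V, v b = m := fun b => walkstep ((hconn i0 b).some) rfl
  intro i j
  rw [hall i, hall j]

end Eigen

/-- For a connected r-regular graph with distinct adjacency eigenvalues
r = λ₁, λ₂, …, λ_t, the polynomial P(x) = n·∏_{i≥2}(x-λᵢ)/∏_{i≥2}(r-λᵢ)
satisfies P(A) = J. -/
theorem stmt5 {V : Type*} [Fintype V] (G : SimpleGraph V) (r : ℕ)
    (hreg : G.IsRegularOfDegree r) (hconn : G.Connected)
    (s : Finset ℝ) (hs : (s : Set ℝ) = spectrum ℝ (G.adjMatrix ℝ) \ {(r : ℝ)}) :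
    Polynomial.aeval (G.adjMatrix ℝ)
        (((Fintype.card V : ℝ) / ∏ l ∈ s, ((r : ℝ) - l)) • ∏ l ∈ s, (X - C l)) =
      Matrix.of (fun _ _ => (1 : ℝ)) := by
  classical
  have hne : Nonempty V := hconn.nonempty
  set A := G.adjMatrix ℝ with hA_def
  have hAsymm : Aᵀ = A := G.transpose_adjMatrix
  have hA : A.IsHermitian := by
    rw [Matrix.IsHermitian, conjTranspose_eq_transpose_of_trivial, hAsymm]
  -- r ∉ s
  have hrns : (r : ℝ) ∉ s := by
    intro h
    have : (r : ℝ) ∈ (s : Set ℝ) := h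
    rw [hs] at this
    exact this.2 rfl
  -- product ≠ 0
  have hprod_ne : (∏ l ∈ s, ((r : ℝ) - l)) ≠ 0 := by
    apply Finset.prod_ne_zero_iff.mpr
    intro l hl
    have : (l : ℝ) ∈ (s : Set ℝ) := hl
    rw [hs] at this
    have : l ≠ (r : ℝ) := this.2
    intro h
    exact this (by linarith)
  have hn_ne : (Fintype.card V : ℝ) ≠ 0 := by
    exact_mod_cast Fintype.card_ne_zero
  set q : ℝ[X] := ∏ l ∈ s, (X - C l) with hq_def
  set B := Polynomial.aeval A q with hB_def
  -- eigenvalues of A lie in insert r s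
  have heig : ∀ i, hA.eigenvalues i ∈ insert (r : ℝ) s := by
    intro i
    have hmem := hA.eigenvalues_mem_spectrum_real i
    by_cases h : hA.eigenvalues i = (r : ℝ)
    · rw [h]; exact Finset.mem_insert_self _ _
    · refine Finset.mem_insert_of_mem ?_
      have : hA.eigenvalues i ∈ (s : Set ℝ) := by rw [hs]; exact ⟨hmem, h⟩
      exact_mod_cast this
  -- annihilating polynomial
  have hannih : Polynomial.aeval A ((X - C (r : ℝ)) * q) = 0 := by
    apply aeval_eq_zero_of_eigenvalues hA
    intro i
    rcases Finset.mem_insert.mp (heig i) with h | h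
    · simp [h]
    · have : q.eval (hA.eigenvalues i) = 0 := by
        rw [hq_def, Polynomial.eval_prod]
        exact Finset.prod_eq_zero h (by simp)
      simp [this]
  -- A * B = r • B
  have hAB : A * B = (r : ℝ) • B := by
    have := hannih
    rw [_root_.map_mul, map_sub, aeval_X, aeval_C, sub_mul, sub_eq_zero] at this
    rw [Algebra.smul_def]
    exact this
  -- columns of B are constant
  have hcol : ∀ i i' j : V, B i j = B i' j := by
    intro i i' j
    have hcolv : A.mulVec (fun k => B k j) = (r : ℝ) • (fun k => B k j) := by
      ext i''
      have : (A * B) i'' j = ((r : ℝ) • B) i'' j := by rw [hAB]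
      simpa [Matrix.mulVec, Matrix.mul_apply, dotProduct] using this
    exact eigen_const G r hreg hconn _ hcolv i i'
  have hBsymm : ∀ i j : V, B i j = B j i := by
    intro i j
    have h : (Polynomial.aeval A q)ᵀ = Polynomial.aeval A q := aeval_transpose A hAsymm q
    have h2 := congrFun (congrFun h j) i
    rw [Matrix.transpose_apply] at h2
    rw [hB_def]
    exact h2
  obtain ⟨i0⟩ := hne
  set β := B i0 i0 with hβ
  have hBconst : ∀ i j : V, B i j = β := by
    intro i j
    calc B i j = B i0 j := hcol i i0 j
      _ = B j i0 := hBsymm i0 j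
      _ = B i0 i0 := hcol j i0 i0
  -- B applied to the all-ones vector
  have hone : A.mulVec (fun _ => (1 : ℝ)) = (r : ℝ) • (fun _ => (1 : ℝ)) := by
    ext i
    rw [hA_def, SimpleGraph.adjMatrix_mulVec_apply]
    simp [hreg i]
  have hBone : B.mulVec (fun _ => (1 : ℝ)) = (q.eval (r : ℝ)) • (fun _ => (1 : ℝ)) :=
    aeval_mulVec_eigen A _ _ hone q
  have hqr : q.eval (r : ℝ) = ∏ l ∈ s, ((r : ℝ) - l) := by
    rw [hq_def, Polynomial.eval_prod]; simp
  have hβval : (Fintype.card V : ℝ) * β = ∏ l ∈ s, ((r : ℝ) - l) := by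
    have := congrFun hBone i0
    rw [Pi.smul_apply, smul_eq_mul, mul_one, hqr] at this
    rw [← this]
    simp only [Matrix.mulVec, dotProduct]
    rw [Finset.sum_congr rfl (fun j _ => by rw [mul_one, hBconst i0 j])]
    rw [Finset.sum_const, nsmul_eq_mul]
    rfl
  -- final computation
  rw [_root_.map_smul, ← hB_def]
  ext i j
  simp only [Matrix.smul_apply, Matrix.of_apply, smul_eq_mul]
  rw [hBconst i j]
  have hβeq : β = (∏ l ∈ s, ((r : ℝ) - l)) / (Fintype.card V : ℝ) := by
    field_simp at hβval ⊢
    linarith [hβval]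
  rw [hβeq]
  field_simp
end

section
/- For any n×n real matrix A, real α, and real x such that xI_n - A is invertible, det(xI_n - A - αJ_n) = (1 - α·χ_A(x))·det(xI_n - A), where χ_A(x) = J_{n×1}^T (xI_n - A)^{-1} J_{n×1}. -/
open Matrix

/-- det(xI - A - αJ) = (1 - α·χ_A(x))·det(xI - A), where χ_A(x) is the sum of
entries of (xI - A)⁻¹. -/
theorem stmt8 {n : ℕ} (A : Matrix (Fin n) (Fin n) ℝ) (α x : ℝ)
    (h : IsUnit (x • (1 : Matrix (Fin n) (Fin n) ℝ) - A).det) :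
    (x • (1 : Matrix (Fin n) (Fin n) ℝ) - A - α • Matrix.of (fun _ _ => (1 : ℝ))).det =
      (1 - α * ∑ i, ∑ j, (x • (1 : Matrix (Fin n) (Fin n) ℝ) - A)⁻¹ i j) *
        (x • (1 : Matrix (Fin n) (Fin n) ℝ) - A).det := by
  set B := x • (1 : Matrix (Fin n) (Fin n) ℝ) - A with hB
  have key : B - α • Matrix.of (fun _ _ => (1 : ℝ)) =
      B + replicateCol Unit (fun _ => -α) * replicateRow Unit (fun _ => (1 : ℝ)) := by
    ext i j
    simp [Matrix.mul_apply, Matrix.replicateCol, Matrix.replicateRow, sub_eq_add_neg]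
  rw [key, det_add_replicateCol_mul_replicateRow h,
    det_unique ((1 : Matrix Unit Unit ℝ) + replicateRow Unit (fun _ => (1:ℝ)) * B⁻¹ *
      replicateCol Unit (fun _ => -α))]
  rw [mul_comm]
  congr 1
  simp only [Matrix.add_apply, Matrix.one_apply_eq, Matrix.mul_apply, Matrix.replicateCol,
    Matrix.replicateRow, Matrix.of_apply]
  rw [sub_eq_add_neg]
  congr 1
  simp [Finset.sum_mul, Finset.mul_sum, mul_comm]
  rw [Finset.sum_comm]
end

section
/- Let G be an r-regular graph on n vertices with adjacency eigenvalue λ ≠ r. Then x is a normalized Laplacian eigenvalue of the central graph C(G) whenever (x-1)((x-1) - (1+λ)/(n-1)) - (λ+r)/(2(n-1)) = 0, i.e., each such λ contributes the two roots of this quadratic to the normalized Laplacian spectrum of C(G). -/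
open scoped Classical
open Polynomial Matrix

/-- The central graph `C(G)`: subdivide every edge of `G` once and join all
nonadjacent vertices of `G`. -/
def centralGraph {V : Type*} (G : SimpleGraph V) : SimpleGraph (V ⊕ G.edgeSet) where
  Adj x y :=
    match x, y with
    | Sum.inl v, Sum.inl w => v ≠ w ∧ ¬ G.Adj v w
    | Sum.inl v, Sum.inr e => v ∈ (e : Sym2 V)
    | Sum.inr e, Sum.inl v => v ∈ (e : Sym2 V)
    | Sum.inr _, Sum.inr _ => False
  symm := by
    constructor
    rintro (v|e) (w|f) h
    · exact ⟨h.1.symm, fun a => h.2 a.symm⟩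
    · exact h
    · exact h
    · exact h
  loopless := by
    constructor
    rintro (v|e) h
    · exact h.1 rfl
    · exact h

/-!
Write `μ = 1 - x`, let `R` be the vertex-edge incidence matrix of `G` and `v` a `λ`-eigenvector
of `A(G)`. Since `λ ≠ r`, `v` is orthogonal to the all-ones vector, so `A(Gᶜ) v = -(1 + λ) v`,
while `R Rᵀ v = (λ + r) v`. The adjacency matrix of `C(G)` is the block matrix
`[A(Gᶜ) R; Rᵀ 0]` and its degrees are `n - 1` and `2`, so `w = (2μ v, Rᵀ v)` solves the
generalized eigenproblem `A w = μ D w` exactly when `μ` is a root of the quadratic, and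
`D^{1/2} w` is then an eigenvector of the normalized Laplacian for `1 - μ = x`.
If `μ = 0` this `w` may vanish. Then `λ = -r`, which forces `Rᵀ v = 0`, and `A(C(G))` has the
kernel vector `(v, 0)` when `r = 1`, and `(0, q)` with `R q = 0` when `r ≥ 2`: such `q` exists
because `G` has at least as many edges as vertices while `R` has rank less than `n`.
-/

theorem Fintype.one_lt_card_of_sum_eq_zero {ι M : Type*} [Fintype ι] [AddCommMonoid M]
    {v : ι → M} (hv : v ≠ 0) (hs : ∑ i, v i = 0) : 1 < Fintype.card ι := by
  obtain ⟨i, hi⟩ := Function.ne_iff.1 hv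
  by_contra h
  have : Subsingleton ι := Fintype.card_le_one_iff_subsingleton.1 (not_lt.1 h)
  exact hi (by rwa [Fintype.sum_subsingleton _ i] at hs)

namespace Matrix

variable {m n K : Type*} [Fintype n] [Field K]

theorem rank_add_finrank_ker_mulVecLin (A : Matrix m n K) :
    A.rank + Module.finrank K (LinearMap.ker A.mulVecLin) = Fintype.card n := by
  rw [rank, LinearMap.finrank_range_add_finrank_ker, Module.finrank_fintype_fun_eq_card]

theorem exists_mulVec_eq_zero_of_transpose_mulVec_eq_zero [Fintype m] (A : Matrix m n K)
    (hmn : Fintype.card m ≤ Fintype.card n) {v : m → K} (hv : v ≠ 0) (hAv : Aᵀ *ᵥ v = 0) :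
    ∃ w ≠ 0, A *ᵥ w = 0 := by
  have hker : Module.finrank K (LinearMap.ker Aᵀ.mulVecLin) ≠ 0 :=
    Submodule.finrank_eq_zero.not.2 ((Submodule.ne_bot_iff _).2 ⟨v, hAv, hv⟩)
  have hrank := Aᵀ.rank_add_finrank_ker_mulVecLin
  rw [rank_transpose] at hrank
  have hker' : LinearMap.ker A.mulVecLin ≠ ⊥ := by
    intro hbot
    have := A.rank_add_finrank_ker_mulVecLin
    rw [hbot, finrank_bot] at this
    omega
  obtain ⟨w, hw, hw0⟩ := (Submodule.ne_bot_iff _).1 hker'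
  exact ⟨w, hw0, hw⟩

end Matrix

namespace SimpleGraph

variable {V R : Type*} (G : SimpleGraph V)

noncomputable def edgeIncMatrix (R : Type*) [Zero R] [One R] : Matrix V G.edgeSet R :=
  (G.incMatrix R).submatrix id Subtype.val

variable [Fintype V]

theorem edgeIncMatrix_mulVec_comp_val [NonAssocSemiring R] (f : Sym2 V → R) :
    G.edgeIncMatrix R *ᵥ (f ∘ Subtype.val) = G.incMatrix R *ᵥ f := by
  ext a
  simp only [mulVec, dotProduct, edgeIncMatrix, submatrix_apply, id, Function.comp_apply]
  rw [← Finset.sum_subtype G.edgeFinset (fun _ => mem_edgeFinset)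
    (fun e => G.incMatrix R a e * f e)]
  refine Finset.sum_subset (Finset.subset_univ _) fun e _ he => ?_
  rw [incMatrix_of_notMem_incidenceSet _ fun h => he (mem_edgeFinset.2 h.1), zero_mul]

theorem edgeIncMatrix_mulVec_one [NonAssocSemiring R] :
    G.edgeIncMatrix R *ᵥ 1 = fun a => (G.degree a : R) := by
  ext a
  rw [← Pi.one_comp Subtype.val, edgeIncMatrix_mulVec_comp_val]
  simp [mulVec, dotProduct, sum_incMatrix_apply]

theorem transpose_edgeIncMatrix_mulVec_one [NonAssocSemiring R] :
    (G.edgeIncMatrix R)ᵀ *ᵥ 1 = 2 := by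
  ext e
  simp [mulVec, dotProduct, edgeIncMatrix, G.sum_incMatrix_apply_of_mem_edgeSet e.2]

theorem compl_adjMatrix_mulVec [Ring R] (v : V → R) :
    Gᶜ.adjMatrix R *ᵥ v = (fun _ => ∑ i, v i) - v - G.adjMatrix R *ᵥ v := by
  rw [← compl_adjMatrix_eq_adjMatrix_compl, eq_sub_of_add_eq'
    (G.one_add_adjMatrix_add_compl_adjMatrix_eq_of_one R), sub_mulVec, add_mulVec, one_mulVec,
    sub_sub]
  congr 1
  ext
  simp [mulVec, dotProduct]

theorem compl_adjMatrix_mulVec_of_sum_eq_zero [CommRing R] {v : V → R} {lam : R}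
    (hv : G.adjMatrix R *ᵥ v = lam • v) (hs : ∑ i, v i = 0) :
    Gᶜ.adjMatrix R *ᵥ v = (-(1 + lam)) • v := by
  rw [compl_adjMatrix_mulVec, hv, hs]
  ext u
  simp only [Pi.sub_apply, Pi.smul_apply, smul_eq_mul]
  ring

variable {G} {r : ℕ}

theorem IsRegularOfDegree.sum_eq_zero_of_adjMatrix_mulVec_eq_smul [CommRing R] [NoZeroDivisors R]
    (hreg : G.IsRegularOfDegree r) {v : V → R} {lam : R} (hv : G.adjMatrix R *ᵥ v = lam • v)
    (hlam : lam ≠ r) : ∑ i, v i = 0 := by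
  have h : lam * ∑ i, v i = r * ∑ i, v i :=
    calc lam * ∑ i, v i = 1 ⬝ᵥ (G.adjMatrix R *ᵥ v) := by
          rw [hv]
          simp [dotProduct, Finset.mul_sum]
      _ = (G.adjMatrix R *ᵥ 1) ⬝ᵥ v := by
          rw [dotProduct_mulVec, ← mulVec_transpose, transpose_adjMatrix]
      _ = r * ∑ i, v i := by
          simp [dotProduct, Finset.mul_sum, hreg.degree_eq]
  exact (mul_eq_mul_right_iff.1 h).resolve_left hlam

theorem IsRegularOfDegree.edgeIncMatrix_mulVec_transpose_mulVec [CommRing R]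
    (hreg : G.IsRegularOfDegree r) (v : V → R) :
    G.edgeIncMatrix R *ᵥ ((G.edgeIncMatrix R)ᵀ *ᵥ v) = G.adjMatrix R *ᵥ v + (r : R) • v := by
  change G.edgeIncMatrix R *ᵥ (((G.incMatrix R)ᵀ *ᵥ v) ∘ Subtype.val) = _
  rw [edgeIncMatrix_mulVec_comp_val, mulVec_mulVec, incMatrix_mul_transpose]
  have hdiag : (of fun a b => if a = b then (G.degree a : R) else if G.Adj a b then 1 else 0) =
      G.adjMatrix R + (r : R) • 1 := by
    ext a b
    by_cases h : a = b
    · simp [h, hreg.degree_eq]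
    · simp [h, one_apply, adjMatrix_apply]
  rw [hdiag, add_mulVec, smul_mulVec, one_mulVec]

theorem IsRegularOfDegree.transpose_edgeIncMatrix_mulVec_eq_zero [CommRing R] [LinearOrder R]
    [IsStrictOrderedRing R] (hreg : G.IsRegularOfDegree r) {v : V → R}
    (hv : G.adjMatrix R *ᵥ v = (-(r : R)) • v) : (G.edgeIncMatrix R)ᵀ *ᵥ v = 0 := by
  refine dotProduct_self_eq_zero.1 ?_
  rw [mulVec_transpose, ← dotProduct_mulVec, ← mulVec_transpose,
    hreg.edgeIncMatrix_mulVec_transpose_mulVec, hv, neg_smul, neg_add_cancel, dotProduct_zero]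

theorem IsRegularOfDegree.card_le_card_edgeSet (hreg : G.IsRegularOfDegree r) (hr : 2 ≤ r) :
    Fintype.card V ≤ Fintype.card G.edgeSet := by
  have := G.sum_degrees_eq_twice_card_edges
  simp only [hreg.degree_eq, Finset.sum_const, Finset.card_univ, smul_eq_mul,
    edgeFinset_card] at this
  nlinarith

end SimpleGraph

theorem normLap_isEigenvalue_of_adjMatrix_mulVec {W : Type*} [Fintype W] (H : SimpleGraph W)
    (hdeg : ∀ z, H.degree z ≠ 0) {w : W → ℝ} (hw : w ≠ 0) (μ : ℝ)
    (h : H.adjMatrix ℝ *ᵥ w = fun z => μ * H.degree z * w z) :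
    (normLap H).IsEigenvalue (1 - μ) := by
  have hs : ∀ z, Real.sqrt (H.degree z) ≠ 0 := fun z =>
    Real.sqrt_ne_zero'.2 (Nat.cast_pos.2 (Nat.pos_of_ne_zero (hdeg z)))
  have hunscale : diagonal (fun z => (Real.sqrt (H.degree z))⁻¹) *ᵥ
      (fun z => Real.sqrt (H.degree z) * w z) = w := by
    ext z
    simp [mulVec_diagonal, hs z]
  refine ⟨fun z => Real.sqrt (H.degree z) * w z, fun h0 => hw ?_, ?_⟩
  · ext z
    simpa [hs z] using congrFun h0 z
  · rw [normLap, sub_mulVec, one_mulVec, ← mulVec_mulVec, ← mulVec_mulVec, hunscale, h]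
    ext z
    have hrescale : (Real.sqrt (H.degree z))⁻¹ * (μ * H.degree z * w z) =
        μ * (Real.sqrt (H.degree z) * w z) := by
      rw [inv_mul_eq_iff_eq_mul₀ (hs z)]
      linear_combination (μ * w z) * (Real.mul_self_sqrt (Nat.cast_nonneg (H.degree z))).symm
    simp only [mulVec_diagonal, Pi.sub_apply, Pi.smul_apply, smul_eq_mul, hrescale]
    ring

section CentralGraph

variable {V R : Type*} (G : SimpleGraph V)

@[simp]
theorem centralGraph_adj_inl_inl {u w : V} :
    (centralGraph G).Adj (Sum.inl u) (Sum.inl w) ↔ Gᶜ.Adj u w := Iff.rfl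

@[simp]
theorem centralGraph_adj_inl_inr {u : V} {e : G.edgeSet} :
    (centralGraph G).Adj (Sum.inl u) (Sum.inr e) ↔ u ∈ (e : Sym2 V) := Iff.rfl

@[simp]
theorem centralGraph_adj_inr_inl {u : V} {e : G.edgeSet} :
    (centralGraph G).Adj (Sum.inr e) (Sum.inl u) ↔ u ∈ (e : Sym2 V) := Iff.rfl

@[simp]
theorem centralGraph_not_adj_inr_inr {e f : G.edgeSet} :
    ¬(centralGraph G).Adj (Sum.inr e) (Sum.inr f) := id

theorem centralGraph_adjMatrix [Zero R] [One R] :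
    (centralGraph G).adjMatrix R =
      fromBlocks (Gᶜ.adjMatrix R) (G.edgeIncMatrix R) (G.edgeIncMatrix R)ᵀ 0 := by
  ext (u | e) (w | f) <;>
    simp [SimpleGraph.adjMatrix_apply, SimpleGraph.edgeIncMatrix, SimpleGraph.incMatrix_apply',
      SimpleGraph.incidenceSet]

variable [Fintype V]

theorem centralGraph_adjMatrix_mulVec [NonAssocSemiring R] (p : V → R) (q : G.edgeSet → R) :
    (centralGraph G).adjMatrix R *ᵥ Sum.elim p q =
      Sum.elim (Gᶜ.adjMatrix R *ᵥ p + G.edgeIncMatrix R *ᵥ q) ((G.edgeIncMatrix R)ᵀ *ᵥ p) := by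
  rw [centralGraph_adjMatrix, fromBlocks_mulVec]
  simp

theorem centralGraph_degree_inl [Ring R] (u : V) :
    ((centralGraph G).degree (Sum.inl u) : R) = Fintype.card V - 1 := by
  have h := (centralGraph G).adjMatrix_mulVec_const_apply (α := R) (a := 1) (v := Sum.inl u)
  rw [mul_one, Function.const_one, ← Sum.elim_one_one, centralGraph_adjMatrix_mulVec] at h
  rw [← h, Sum.elim_inl, G.compl_adjMatrix_mulVec, G.edgeIncMatrix_mulVec_one]
  simp

theorem centralGraph_degree_inr [Ring R] (e : G.edgeSet) :
    ((centralGraph G).degree (Sum.inr e) : R) = 2 := by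
  have h := (centralGraph G).adjMatrix_mulVec_const_apply (α := R) (a := 1) (v := Sum.inr e)
  rw [mul_one, Function.const_one, ← Sum.elim_one_one, centralGraph_adjMatrix_mulVec] at h
  rw [← h, Sum.elim_inr, G.transpose_edgeIncMatrix_mulVec_one, Pi.ofNat_apply]

theorem normLap_centralGraph_isEigenvalue_of (hn : 1 < Fintype.card V) {p : V → ℝ}
    {q : G.edgeSet → ℝ} (hpq : Sum.elim p q ≠ 0) (μ : ℝ)
    (h₁ : Gᶜ.adjMatrix ℝ *ᵥ p + G.edgeIncMatrix ℝ *ᵥ q = (μ * (Fintype.card V - 1)) • p)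
    (h₂ : (G.edgeIncMatrix ℝ)ᵀ *ᵥ p = (2 * μ) • q) :
    (normLap (centralGraph G)).IsEigenvalue (1 - μ) := by
  refine normLap_isEigenvalue_of_adjMatrix_mulVec _ ?_ hpq μ ?_
  · rintro (u | e) h
    · have hu := centralGraph_degree_inl G (R := ℝ) u
      have hn' : (1 : ℝ) < Fintype.card V := by exact_mod_cast hn
      rw [h, Nat.cast_zero] at hu
      linarith
    · have he := centralGraph_degree_inr G (R := ℝ) e
      rw [h, Nat.cast_zero] at he
      norm_num at he
  · rw [centralGraph_adjMatrix_mulVec, h₁, h₂]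
    ext (u | e)
    · simp [centralGraph_degree_inl]
    · simp [centralGraph_degree_inr, mul_comm]

end CentralGraph

namespace SimpleGraph.IsRegularOfDegree

variable {V : Type*} [Fintype V] {G : SimpleGraph V} {r : ℕ}

theorem normLap_centralGraph_isEigenvalue_one_sub (hreg : G.IsRegularOfDegree r) {v : V → ℝ}
    {lam : ℝ} (hv0 : v ≠ 0) (hv : G.adjMatrix ℝ *ᵥ v = lam • v) (hlam : lam ≠ r) {μ : ℝ}
    (hμ : μ ≠ 0) (hquad : 2 * (Fintype.card V - 1) * μ ^ 2 + 2 * (1 + lam) * μ = lam + r) :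
    (normLap (centralGraph G)).IsEigenvalue (1 - μ) := by
  have hs := hreg.sum_eq_zero_of_adjMatrix_mulVec_eq_smul hv hlam
  refine normLap_centralGraph_isEigenvalue_of G (Fintype.one_lt_card_of_sum_eq_zero hv0 hs)
    (p := (2 * μ) • v) (q := (G.edgeIncMatrix ℝ)ᵀ *ᵥ v)
    (fun h => smul_ne_zero (mul_ne_zero two_ne_zero hμ) hv0
      (funext fun u => congrFun h (Sum.inl u))) μ ?_ (mulVec_smul _ _ _)
  rw [mulVec_smul, G.compl_adjMatrix_mulVec_of_sum_eq_zero hv hs,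
    hreg.edgeIncMatrix_mulVec_transpose_mulVec, hv]
  ext u
  simp only [Pi.add_apply, Pi.smul_apply, smul_eq_mul]
  linear_combination (-v u) * hquad

theorem normLap_centralGraph_isEigenvalue_one (hreg : G.IsRegularOfDegree r) (hr : r ≠ 0)
    {v : V → ℝ} (hv0 : v ≠ 0) (hv : G.adjMatrix ℝ *ᵥ v = (-(r : ℝ)) • v) :
    (normLap (centralGraph G)).IsEigenvalue 1 := by
  have hs := hreg.sum_eq_zero_of_adjMatrix_mulVec_eq_smul hv (by simpa using hr)
  have hn := Fintype.one_lt_card_of_sum_eq_zero hv0 hs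
  have hRv := hreg.transpose_edgeIncMatrix_mulVec_eq_zero hv
  rw [← sub_zero 1]
  obtain rfl | hr2 : r = 1 ∨ 2 ≤ r := by omega
  · refine normLap_centralGraph_isEigenvalue_of G hn (p := v) (q := 0)
      (fun h => hv0 (funext fun u => congrFun h (Sum.inl u))) 0 ?_ (by simp [hRv])
    rw [G.compl_adjMatrix_mulVec_of_sum_eq_zero hv hs]
    simp
  · obtain ⟨q, hq0, hq⟩ := (G.edgeIncMatrix ℝ).exists_mulVec_eq_zero_of_transpose_mulVec_eq_zero
      (hreg.card_le_card_edgeSet hr2) hv0 hRv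
    exact normLap_centralGraph_isEigenvalue_of G hn (p := 0) (q := q)
      (fun h => hq0 (funext fun e => congrFun h (Sum.inr e))) 0 (by simp [hq]) (by simp)

end SimpleGraph.IsRegularOfDegree

/-- Each adjacency eigenvalue λ ≠ r of an r-regular graph G contributes the two
roots of (x-1)((x-1) - (1+λ)/(n-1)) - (λ+r)/(2(n-1)) = 0 to the normalized
Laplacian spectrum of the central graph C(G). -/
theorem stmt11 {V : Type*} [Fintype V] (G : SimpleGraph V) (r : ℕ)
    (hreg : G.IsRegularOfDegree r) (lam : ℝ)
    (hlam : (G.adjMatrix ℝ).IsEigenvalue lam) (hne : lam ≠ (r : ℝ)) (x : ℝ)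
    (hx : (x - 1) * ((x - 1) - (1 + lam) / ((Fintype.card V : ℝ) - 1)) -
        (lam + r) / (2 * ((Fintype.card V : ℝ) - 1)) = 0) :
    (normLap (centralGraph G)).IsEigenvalue x := by
  obtain ⟨v, hv0, hv⟩ := hlam
  have hn : (1 : ℝ) < Fintype.card V := by
    exact_mod_cast Fintype.one_lt_card_of_sum_eq_zero hv0
      (hreg.sum_eq_zero_of_adjMatrix_mulVec_eq_smul hv hne)
  have hquad : 2 * (Fintype.card V - 1) * (1 - x) ^ 2 + 2 * (1 + lam) * (1 - x) = lam + r := by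
    have : (Fintype.card V : ℝ) - 1 ≠ 0 := by linarith
    field_simp at hx
    linear_combination hx
  obtain rfl | hx1 := eq_or_ne x 1
  · obtain rfl : lam = -r := by simpa [add_eq_zero_iff_eq_neg, eq_comm] using hquad
    exact hreg.normLap_centralGraph_isEigenvalue_one (by rintro rfl; simp at hne) hv0 hv
  · simpa using hreg.normLap_centralGraph_isEigenvalue_one_sub hv0 hv hne
      (sub_ne_zero.2 hx1.symm) hquad
end
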